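/- arXiv:1911.03812 — 3 statements merged into one kernel-verified Lean document; each statement's English description precedes it below -/
import Mathlib

section
/- (Divergence-free vector fields under the flattening map) Let Φ, J, 𝒜 be as in the flattening construction, and let u : Ω → ℝ^d satisfy the transformed incompressibility condition 𝒜_{ij} ∂_j u_i = 0. Then the ordinary divergence of u can be written as div u = −D·((J−1)u_h) + ∂_d(Dφ · u_h), where u_h is the horizontal component of u, D the horizontal divergence/gradient, and ∂_d the vertical derivative. -/
/-- The partial derivative `∂_i f` on `ℝ^{d+1}`. -/
noncomputable def pd {d : ℕ} (i : Fin (d + 1)) (f : EuclideanSpace ℝ (Fin (d + 1)) → ℝ)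
    (x : EuclideanSpace ℝ (Fin (d + 1))) : ℝ :=
  fderiv ℝ f x (EuclideanSpace.single i 1)

/-- The matrix `𝒜 = ((∇Φ)^{-1})ᵀ = [[I, -K Dφ],[0, K]]` of the flattening map, where
`J = 1 + ∂_d φ`, `K = J⁻¹`; the last coordinate is the vertical one. -/
noncomputable def Amat {d : ℕ} (φ : EuclideanSpace ℝ (Fin (d + 1)) → ℝ)
    (i j : Fin (d + 1)) (x : EuclideanSpace ℝ (Fin (d + 1))) : ℝ :=
  if i = Fin.last d then (if j = Fin.last d then (1 + pd (Fin.last d) φ x)⁻¹ else 0)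
  else if j = Fin.last d then -(1 + pd (Fin.last d) φ x)⁻¹ * pd i φ x
  else if i = j then 1 else 0

variable {d : ℕ}

lemma pd_mul {f g : EuclideanSpace ℝ (Fin (d + 1)) → ℝ} {x} (i : Fin (d+1))
    (hf : DifferentiableAt ℝ f x) (hg : DifferentiableAt ℝ g x) :
    pd i (fun y => f y * g y) x = pd i f x * g x + f x * pd i g x := by
  simp [pd, fderiv_fun_mul hf hg]
  ring

lemma pd_sum {ι : Type*} (s : Finset ι) (f : ι → EuclideanSpace ℝ (Fin (d + 1)) → ℝ) {x}
    (i : Fin (d+1)) (hf : ∀ j ∈ s, DifferentiableAt ℝ (f j) x) :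
    pd i (fun y => ∑ j ∈ s, f j y) x = ∑ j ∈ s, pd i (f j) x := by
  simp [pd, fderiv_fun_sum hf]

lemma diff_pd {φ : EuclideanSpace ℝ (Fin (d + 1)) → ℝ} (hφ : ContDiff ℝ 2 φ) (j : Fin (d+1)) :
    Differentiable ℝ (pd j φ) := by
  have h1 : Differentiable ℝ (fderiv ℝ φ) :=
    (hφ.fderiv_right (m := 1) (by norm_num)).differentiable one_ne_zero
  exact h1.clm_apply (differentiable_const _)

lemma pd_symm {φ : EuclideanSpace ℝ (Fin (d + 1)) → ℝ} (hφ : ContDiff ℝ 2 φ) (i j : Fin (d+1)) (x) :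
    pd i (pd j φ) x = pd j (pd i φ) x := by
  have h1 : Differentiable ℝ (fderiv ℝ φ) :=
    (hφ.fderiv_right (m := 1) (by norm_num)).differentiable one_ne_zero
  have hsymm := hφ.contDiffAt.isSymmSndFDerivAt (x := x) (by norm_num)
  have key : ∀ k l : Fin (d+1), pd k (pd l φ) x
      = fderiv ℝ (fderiv ℝ φ) x (EuclideanSpace.single k 1) (EuclideanSpace.single l 1) := by
    intro k l
    have : pd l φ = fun y => (fderiv ℝ φ y) (EuclideanSpace.single l 1) := rfl
    rw [pd, this, fderiv_clm_apply (h1 x) (differentiableAt_const _)]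
    simp
  rw [key, key, hsymm]

/-- Divergence-free vector fields under the flattening map: if `𝒜_{ij} ∂_j u_i = 0`
(the transformed incompressibility condition), then
`div u = -D·((J-1) u_h) + ∂_d(Dφ · u_h)`, where `J - 1 = ∂_d φ`, `u_h` is the horizontal
component of `u`, `D` the horizontal gradient/divergence and `∂_d` the vertical
derivative. -/
theorem div_of_A_divergence_free (d : ℕ)
    (φ : EuclideanSpace ℝ (Fin (d + 1)) → ℝ)
    (u : EuclideanSpace ℝ (Fin (d + 1)) → EuclideanSpace ℝ (Fin (d + 1)))
    (hφ : ContDiff ℝ 2 φ) (hu : ContDiff ℝ 1 u)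
    (hJ : ∀ x, 1 + pd (Fin.last d) φ x ≠ 0)
    (hdiv : ∀ x, ∑ i : Fin (d + 1), ∑ j : Fin (d + 1),
      Amat φ i j x * pd j (fun y => u y i) x = 0) :
    ∀ x, ∑ i : Fin (d + 1), pd i (fun y => u y i) x
      = -(∑ i ∈ Finset.univ.erase (Fin.last d),
            pd i (fun y => pd (Fin.last d) φ y * u y i) x)
        + pd (Fin.last d)
            (fun y => ∑ i ∈ Finset.univ.erase (Fin.last d), pd i φ y * u y i) x := by
  intro x
  have hu' : ∀ i, Differentiable ℝ (fun y => u y i) := fun i =>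
    (EuclideanSpace.proj i : EuclideanSpace ℝ (Fin (d+1)) →L[ℝ] ℝ).differentiable.comp
      (hu.differentiable one_ne_zero)
  set K := (1 + pd (Fin.last d) φ x)⁻¹ with hKdef
  -- compute inner sums of hdiv
  have innerlast : ∑ j, Amat φ (Fin.last d) j x * pd j (fun y => u y (Fin.last d)) x
      = K * pd (Fin.last d) (fun y => u y (Fin.last d)) x := by
    simp [Amat, ite_mul, hKdef]
  have inner : ∀ i ∈ Finset.univ.erase (Fin.last d),
      ∑ j, Amat φ i j x * pd j (fun y => u y i) x
      = pd i (fun y => u y i) x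
        + (-K) * (pd i φ x * pd (Fin.last d) (fun y => u y i) x) := by
    intro i hi
    have hi' : i ≠ Fin.last d := (Finset.mem_erase.mp hi).1
    rw [← Finset.sum_erase_add _ _ (Finset.mem_univ (Fin.last d))]
    congr 1
    · calc ∑ j ∈ Finset.univ.erase (Fin.last d), Amat φ i j x * pd j (fun y => u y i) x
          = ∑ j ∈ Finset.univ.erase (Fin.last d),
              (if i = j then pd j (fun y => u y i) x else 0) :=
            Finset.sum_congr rfl (fun j hj => by
              have hj' : j ≠ Fin.last d := (Finset.mem_erase.mp hj).1
              simp [Amat, hi', hj', ite_mul])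
        _ = pd i (fun y => u y i) x := by
            rw [Finset.sum_ite_eq]
            simp [hi']
    · simp [Amat, hi']
      ring
  have key := hdiv x
  rw [← Finset.sum_erase_add _ _ (Finset.mem_univ (Fin.last d)), innerlast,
    Finset.sum_congr rfl inner, Finset.sum_add_distrib, ← Finset.mul_sum] at key
  -- compute the goal
  rw [← Finset.sum_erase_add _ _ (Finset.mem_univ (Fin.last d))]
  rw [pd_sum _ (fun i y => pd i φ y * u y i) _ (fun i _ => ((diff_pd hφ i) x).mul ((hu' i) x))]
  rw [Finset.sum_congr rfl (fun i _ =>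
      pd_mul i ((diff_pd hφ (Fin.last d)) x) ((hu' i) x)),
    Finset.sum_congr rfl (fun i (_ : i ∈ Finset.univ.erase (Fin.last d)) =>
      pd_mul (Fin.last d) ((diff_pd hφ i) x) ((hu' i) x)),
    Finset.sum_add_distrib, Finset.sum_add_distrib]
  have hsym : ∑ i ∈ Finset.univ.erase (Fin.last d), pd i (pd (Fin.last d) φ) x * u x i
      = ∑ i ∈ Finset.univ.erase (Fin.last d), pd (Fin.last d) (pd i φ) x * u x i :=
    Finset.sum_congr rfl (fun i _ => by rw [pd_symm hφ])
  rw [hsym, ← Finset.mul_sum]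
  set S := ∑ i ∈ Finset.univ.erase (Fin.last d), pd i (fun y => u y i) x
  set T := ∑ i ∈ Finset.univ.erase (Fin.last d),
    pd i φ x * pd (Fin.last d) (fun y => u y i) x
  set C := ∑ i ∈ Finset.univ.erase (Fin.last d), pd (Fin.last d) (pd i φ) x * u x i
  set a := pd (Fin.last d) φ x
  set Dd := pd (Fin.last d) (fun y => u y (Fin.last d)) x
  have hK : (1 + a) * K = 1 := mul_inv_cancel₀ (hJ x)
  linear_combination (1 + a) * key + (T - Dd) * hK
end

section
/- (Alinhac good-unknown cancellation) Let φ be smooth on the slab with ∂_d(x_d + φ) = J ≠ 0, set K = 1/J, and define the 𝒜-derivatives ∂_i^𝒜 f = ∂_i f − K ∂_i φ ∂_d f for i < d and ∂_d^𝒜 f = K ∂_d f. Then for any multi-index α of horizontal derivatives, ∂^α(∂_i^𝒜 f) = ∂_i^𝒜(∂^α f − (∂_d^𝒜 f) ∂^α φ) + (∂_d^𝒜 ∂_i^𝒜 f) ∂^α φ + 𝒞_i^α(f), where the commutator 𝒞_i^α(f) contains only derivatives of φ of order strictly less than |α| + 1 (i.e., the highest-order derivative ∂^α φ appears only in the displayed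 terms). -/
/-- The `𝒜`-derivatives associated with the flattening map: for horizontal `i`
(`i ≠ last`), `∂_i^𝒜 f = ∂_i f - K ∂_i φ ∂_d f`, and `∂_d^𝒜 f = K ∂_d f`, where
`K = (1 + ∂_d φ)⁻¹` and the last coordinate is the vertical one. -/
noncomputable def pdA {d : ℕ} (φ : EuclideanSpace ℝ (Fin (d + 1)) → ℝ)
    (i : Fin (d + 1)) (f : EuclideanSpace ℝ (Fin (d + 1)) → ℝ)
    (x : EuclideanSpace ℝ (Fin (d + 1))) : ℝ :=
  if i = Fin.last d then (1 + pd (Fin.last d) φ x)⁻¹ * pd (Fin.last d) f x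
  else pd i f x - pd i φ x * ((1 + pd (Fin.last d) φ x)⁻¹ * pd (Fin.last d) f x)

variable {d : ℕ} {φ u v : EuclideanSpace ℝ (Fin (d + 1)) → ℝ}
  {x : EuclideanSpace ℝ (Fin (d + 1))} {a j k : Fin (d + 1)}

section Partial

lemma pd_sub (hu : DifferentiableAt ℝ u x) (hv : DifferentiableAt ℝ v x) :
    pd j (fun y => u y - v y) x = pd j u x - pd j v x := by
  simp [pd, fderiv_fun_sub hu hv]

lemma pd_mul_s16 (hu : DifferentiableAt ℝ u x) (hv : DifferentiableAt ℝ v x) :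
    pd j (fun y => u y * v y) x = pd j u x * v x + u x * pd j v x := by
  simp [pd, fderiv_fun_mul hu hv]
  ring

lemma pd_const_add (c : ℝ) : pd j (fun y => c + u y) x = pd j u x := by
  simp [pd, fderiv_const_add]

lemma pd_inv (hu : DifferentiableAt ℝ u x) (hux : u x ≠ 0) :
    pd j (fun y => (u y)⁻¹) x = -(u x ^ 2)⁻¹ * pd j u x := by
  have : fderiv ℝ (fun y => (u y)⁻¹) x
      = (fderiv ℝ (fun t : ℝ => t⁻¹) (u x)).comp (fderiv ℝ u x) :=
    fderiv_comp x (differentiableAt_inv hux) hu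
  simp [pd, this, fderiv_inv]
  ring

lemma differentiable_pd (hu : ContDiff ℝ 2 u) :
    Differentiable ℝ (pd k u) :=
  ((hu.fderiv_right (by norm_num : (1 : WithTop ℕ∞) + 1 ≤ 2)).differentiable
    one_ne_zero).clm_apply (differentiable_const _)

lemma pd_pd_eq_fderiv_fderiv (hu : ContDiff ℝ 2 u) :
    pd j (pd k u) x
      = fderiv ℝ (fderiv ℝ u) x (EuclideanSpace.single j 1) (EuclideanSpace.single k 1) := by
  have hdu : DifferentiableAt ℝ (fderiv ℝ u) x :=
    (hu.fderiv_right (by norm_num : (1 : WithTop ℕ∞) + 1 ≤ 2)).differentiable one_ne_zero x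
  change fderiv ℝ (fun y => fderiv ℝ u y (EuclideanSpace.single k 1)) x _ = _
  rw [fderiv_clm_apply hdu (differentiableAt_const _)]
  simp

lemma pd_comm (hu : ContDiff ℝ 2 u) :
    pd j (pd k u) x = pd k (pd j u) x := by
  rw [pd_pd_eq_fderiv_fderiv hu, pd_pd_eq_fderiv_fderiv hu]
  exact hu.contDiffAt.isSymmSndFDerivAt (by simp) _ _

end Partial

section Flattened

lemma pdA_last_apply :
    pdA φ (Fin.last d) u x = (1 + pd (Fin.last d) φ x)⁻¹ * pd (Fin.last d) u x := by
  simp [pdA]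

lemma pdA_last_eq :
    pdA φ (Fin.last d) u = fun y => (1 + pd (Fin.last d) φ y)⁻¹ * pd (Fin.last d) u y :=
  funext fun _ => pdA_last_apply

/-- For `j = last` this is `K = 1 - K ∂_d φ`, so the horizontal formula covers all directions. -/
lemma pdA_apply (hJ : 1 + pd (Fin.last d) φ x ≠ 0) :
    pdA φ j u x = pd j u x - pd j φ x * pdA φ (Fin.last d) u x := by
  by_cases hj : j = Fin.last d
  · subst hj
    rw [pdA_last_apply]
    field_simp
    ring
  · simp [pdA, hj]

lemma pdA_sub (hu : DifferentiableAt ℝ u x) (hv : DifferentiableAt ℝ v x) :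
    pdA φ j (fun y => u y - v y) x = pdA φ j u x - pdA φ j v x := by
  unfold pdA
  split_ifs <;> simp only [pd_sub hu hv] <;> ring

lemma pdA_mul (hu : DifferentiableAt ℝ u x) (hv : DifferentiableAt ℝ v x) :
    pdA φ j (fun y => u y * v y) x = pdA φ j u x * v x + u x * pdA φ j v x := by
  unfold pdA
  split_ifs <;> simp only [pd_mul_s16 hu hv] <;> ring

variable (hφ : ContDiff ℝ 2 φ) (hJ : ∀ y, 1 + pd (Fin.last d) φ y ≠ 0)
include hφ hJ

lemma differentiable_pdA_last (hu : ContDiff ℝ 2 u) :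
    Differentiable ℝ (pdA φ (Fin.last d) u) := by
  rw [pdA_last_eq]
  exact (((differentiable_const 1).add (differentiable_pd hφ)).fun_inv hJ).fun_mul
    (differentiable_pd hu)

lemma pd_pdA_last (hu : ContDiff ℝ 2 u) :
    pd a (pdA φ (Fin.last d) u) x
      = pdA φ (Fin.last d) (pd a u) x
        - pdA φ (Fin.last d) (pd a φ) x * pdA φ (Fin.last d) u x := by
  have hJd : Differentiable ℝ (fun y => 1 + pd (Fin.last d) φ y) :=
    (differentiable_const 1).add (differentiable_pd hφ)
  have hK : pd a (fun y => (1 + pd (Fin.last d) φ y)⁻¹) x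
      = -((1 + pd (Fin.last d) φ x) ^ 2)⁻¹ * pd a (pd (Fin.last d) φ) x := by
    rw [pd_inv (hJd x) (hJ x), pd_const_add]
  rw [pdA_last_eq (u := u), pd_mul_s16 ((hJd.fun_inv hJ) x) (differentiable_pd hu x), hK,
    pdA_last_apply, pdA_last_apply, pd_comm hu, pd_comm hφ]
  have := hJ x
  field_simp
  ring

lemma pd_pdA (hu : ContDiff ℝ 2 u) :
    pd a (pdA φ j u) x
      = pdA φ j (pd a u) x - pdA φ j (pd a φ) x * pdA φ (Fin.last d) u x := by
  have hA : pdA φ j u = fun y => pd j u y - pd j φ y * pdA φ (Fin.last d) u y :=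
    funext fun y => pdA_apply (hJ y)
  have hW := differentiable_pdA_last hφ hJ hu
  rw [hA, pd_sub (differentiable_pd hu x) ((differentiable_pd hφ x).fun_mul (hW x)),
    pd_mul_s16 (differentiable_pd hφ x) (hW x), pd_pdA_last hφ hJ hu,
    pdA_apply (hJ x) (j := j) (u := pd a u), pdA_apply (hJ x) (j := j) (u := pd a φ),
    pd_comm hu, pd_comm hφ]
  ring

lemma pdA_pdA_last_comm (hu : ContDiff ℝ 2 u) :
    pdA φ j (pdA φ (Fin.last d) u) x = pdA φ (Fin.last d) (pdA φ j u) x := by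
  have hA : pdA φ j u = fun y => pd j u y - pd j φ y * pdA φ (Fin.last d) u y :=
    funext fun y => pdA_apply (hJ y)
  have hW := differentiable_pdA_last hφ hJ hu
  rw [pdA_apply (hJ x), pd_pdA_last hφ hJ hu, hA,
    pdA_sub (differentiable_pd hu x) ((differentiable_pd hφ x).fun_mul (hW x)),
    pdA_mul (differentiable_pd hφ x) (hW x)]
  ring

end Flattened

theorem alinhac_good_unknown_general (d : ℕ)
    (φ f : EuclideanSpace ℝ (Fin (d + 1)) → ℝ)
    (hφ : ContDiff ℝ 2 φ) (hf : ContDiff ℝ 2 f)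
    (hJ : ∀ x, 1 + pd (Fin.last d) φ x ≠ 0)
    (i a : Fin (d + 1)) :
    ∀ x, pd a (pdA φ i f) x
      = pdA φ i (fun y => pd a f y - pdA φ (Fin.last d) f y * pd a φ y) x
        + pdA φ (Fin.last d) (pdA φ i f) x * pd a φ x := by
  intro x
  have hW := differentiable_pdA_last hφ hJ hf
  rw [pd_pdA hφ hJ hf, pdA_sub (differentiable_pd hf x) ((hW x).fun_mul (differentiable_pd hφ x)),
    pdA_mul (hW x) (differentiable_pd hφ x), pdA_pdA_last_comm hφ hJ hf]
  ring

/-- Alinhac good-unknown cancellation (verified for a horizontal derivative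
`∂^α = ∂_a`, `|α| = 1`, where the commutator `𝒞_i^α(f)` vanishes identically and hence
contains no derivative of `φ` of order `|α| + 1`): for horizontal `i`,
`∂^α(∂_i^𝒜 f) = ∂_i^𝒜(∂^α f - (∂_d^𝒜 f) ∂^α φ) + (∂_d^𝒜 ∂_i^𝒜 f) ∂^α φ`,
i.e. applying `∂^α` to `∂_i^𝒜 f` and passing to the good unknown
`F^α = ∂^α f - (∂_d^𝒜 f) ∂^α φ` cancels the highest-order derivative of `φ`. -/
theorem alinhac_good_unknown (d : ℕ)
    (φ f : EuclideanSpace ℝ (Fin (d + 1)) → ℝ)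
    (hφ : ContDiff ℝ 2 φ) (hf : ContDiff ℝ 2 f)
    (hJ : ∀ x, 1 + pd (Fin.last d) φ x ≠ 0)
    (i a : Fin (d + 1)) (hi : i ≠ Fin.last d) (ha : a ≠ Fin.last d) :
    ∀ x, pd a (pdA φ i f) x
      = pdA φ i (fun y => pd a f y - pdA φ (Fin.last d) f y * pd a φ y) x
        + pdA φ (Fin.last d) (pdA φ i f) x * pd a φ x :=
  alinhac_good_unknown_general d φ f hφ hf hJ i a
end

section
/- (Time-weighted energy absorption) Suppose F : [0,T] → [0,∞) is differentiable, A, B ≥ 0, ϑ > 0, and F satisfies F'(t) ≤ A(t)√F(t) + B(t) F(t) on [0,T], where ∫₀^t A(r)²(1+r)^{−ϑ} dr ≤ M and B(t) ≤ δ(1+t)^{−1} with δ sufficiently small depending on ϑ. Then sup_{0≤t≤T} F(t)(1+t)^{−1−ϑ} + ∫₀^T F(r)(1+r)^{−2−ϑ} dr ≲ F(0) + M. -/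
/-!
Multiplying by the weight `(1 + t)^{-(1+ϑ)}` turns the growth term `B F ≤ (ϑ/2) F / (1 + t)` into
at most half of the damping `(1 + ϑ) F (1 + t)^{-(2+ϑ)}` produced by differentiating the weight,
and Young's inequality `A √F w ≤ A²/2 + F w²/2` splits the source term into the integrable part
`A² (1 + t)^{-ϑ}/2` and another half of the damping. Hence
`d/dt [F (1+t)^{-(1+ϑ)}] ≤ A² (1+t)^{-ϑ}/2 - F (1+t)^{-(2+ϑ)}/2`, and integrating in time bounds
both the weighted energy and the weighted dissipation by `F 0 + M`.
-/

open MeasureTheory Set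

lemma sub_le_integral_of_hasDerivAt_of_le {g g' φ : ℝ → ℝ} {a b : ℝ} (hab : a ≤ b)
    (hg : ∀ x ∈ Icc a b, HasDerivAt g (g' x) x) (hφ : IntervalIntegrable φ volume a b)
    (hle : ∀ x ∈ Icc a b, g' x ≤ φ x) : g b - g a ≤ ∫ x in a..b, φ x :=
  intervalIntegral.sub_le_integral_of_hasDeriv_right_of_le hab
    (fun x hx => (hg x hx).continuousAt.continuousWithinAt)
    (fun x hx => (hg x (Ioo_subset_Icc_self hx)).hasDerivWithinAt)
    ((intervalIntegrable_iff_integrableOn_Icc_of_le hab).mp hφ)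
    (fun x hx => hle x (Ioo_subset_Icc_self hx))

lemma hasDerivAt_mul_one_add_rpow {f : ℝ → ℝ} {f' t : ℝ} (p : ℝ) (hf : HasDerivAt f f' t)
    (ht : 0 < 1 + t) :
    HasDerivAt (fun s => f s * (1 + s) ^ p) (f' * (1 + t) ^ p + p * f t * (1 + t) ^ (p - 1)) t := by
  have hw : HasDerivAt (fun s : ℝ => (1 + s) ^ p) (p * (1 + t) ^ (p - 1)) t := by
    simpa using ((hasDerivAt_id t).const_add 1).rpow_const (p := p) (Or.inl ht.ne')
  exact (hf.mul hw).congr_deriv (by ring)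

lemma young_absorption {a b d x w θ : ℝ} (hx : 0 ≤ x) (hw : 0 < w) (hθ : 0 ≤ θ)
    (hd : d ≤ a * √x + b * x) (hb : b ≤ θ / 2 * w⁻¹) :
    d / w - (1 + θ) * x / w ^ 2 ≤ a ^ 2 / 2 - x / (2 * w ^ 2) := by
  set y := √x / w
  have hxy : x / w ^ 2 = y ^ 2 := by rw [div_pow, Real.sq_sqrt hx]
  have hdy : d / w ≤ a * y + b * w * y ^ 2 := by
    calc d / w ≤ (a * √x + b * x) / w := by gcongr
      _ = a * y + b * w * y ^ 2 := by
        simp only [y]; rw [div_pow, Real.sq_sqrt hx]; field_simp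
  have hbw : b * w ≤ θ / 2 := by
    calc b * w ≤ θ / 2 * w⁻¹ * w := by gcongr
      _ = θ / 2 := by field_simp
  have hbwy : b * w * y ^ 2 ≤ θ / 2 * y ^ 2 := by gcongr
  calc d / w - (1 + θ) * x / w ^ 2 = d / w - (1 + θ) * y ^ 2 := by rw [mul_div_assoc, hxy]
    _ ≤ a ^ 2 / 2 - y ^ 2 / 2 := by nlinarith [sq_nonneg (a - y), sq_nonneg y]
    _ = a ^ 2 / 2 - x / (2 * w ^ 2) := by rw [← hxy]; ring

lemma young_absorption_weighted {a b d x w θ : ℝ} (hx : 0 ≤ x) (hw : 0 < w) (hθ : 0 ≤ θ)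
    (hd : d ≤ a * √x + b * x) (hb : b ≤ θ / 2 * w⁻¹) :
    d * w ^ (-(1 + θ)) + -(1 + θ) * x * w ^ (-(1 + θ) - 1) ≤
      a ^ 2 * w ^ (-θ) / 2 - x * w ^ (-(2 + θ)) / 2 := by
  have h1 : w ^ (-(1 + θ)) = w ^ (-θ) / w := by
    rw [← Real.rpow_sub_one hw.ne']; ring_nf
  have h2 : w ^ (-(1 + θ) - 1) = w ^ (-θ) / w ^ 2 := by
    rw [← Real.rpow_sub_natCast hw.ne']; ring_nf
  have h2' : w ^ (-(2 + θ)) = w ^ (-θ) / w ^ 2 := by rw [← h2]; ring_nf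
  have hk : 0 ≤ w ^ (-θ) := Real.rpow_nonneg hw.le _
  calc d * w ^ (-(1 + θ)) + -(1 + θ) * x * w ^ (-(1 + θ) - 1)
      = w ^ (-θ) * (d / w - (1 + θ) * x / w ^ 2) := by rw [h1, h2]; ring
    _ ≤ w ^ (-θ) * (a ^ 2 / 2 - x / (2 * w ^ 2)) :=
      mul_le_mul_of_nonneg_left (young_absorption hx hw hθ hd hb) hk
    _ = a ^ 2 * w ^ (-θ) / 2 - x * w ^ (-(2 + θ)) / 2 := by rw [h2']; ring

theorem weighted_energy_add_half_dissipation_le {ϑ T : ℝ} {F A B : ℝ → ℝ} (hϑ : 0 ≤ ϑ)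
    (hT : 0 ≤ T) (hFd : ∀ t ∈ Icc 0 T, DifferentiableAt ℝ F t) (hF : ∀ t ∈ Icc 0 T, 0 ≤ F t)
    (hder : ∀ t ∈ Icc 0 T, deriv F t ≤ A t * √(F t) + B t * F t)
    (hB : ∀ t ∈ Icc 0 T, B t ≤ ϑ / 2 * (1 + t)⁻¹)
    (hA : IntervalIntegrable (fun r => A r ^ 2 * (1 + r) ^ (-ϑ)) volume 0 T) :
    F T * (1 + T) ^ (-(1 + ϑ)) + (∫ r in 0..T, F r * (1 + r) ^ (-(2 + ϑ))) / 2 ≤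
      F 0 + (∫ r in 0..T, A r ^ 2 * (1 + r) ^ (-ϑ)) / 2 := by
  have hpos : ∀ t ∈ Icc 0 T, (0 : ℝ) < 1 + t := fun t ht => by linarith [ht.1]
  have hdiss : IntervalIntegrable (fun r => F r * (1 + r) ^ (-(2 + ϑ))) volume 0 T := by
    refine ContinuousOn.intervalIntegrable_of_Icc hT (ContinuousOn.mul ?_ ?_)
    · exact fun t ht => (hFd t ht).continuousAt.continuousWithinAt
    · exact ContinuousOn.rpow_const (by fun_prop) fun t ht => Or.inl (hpos t ht).ne'
  have hFTC := sub_le_integral_of_hasDerivAt_of_le hT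
    (fun t ht => hasDerivAt_mul_one_add_rpow (-(1 + ϑ)) (hFd t ht).hasDerivAt (hpos t ht))
    ((hA.div_const 2).sub (hdiss.div_const 2))
    (fun t ht => young_absorption_weighted (hF t ht) (hpos t ht) hϑ (hder t ht) (hB t ht))
  rw [intervalIntegral.integral_sub (hA.div_const 2) (hdiss.div_const 2),
    intervalIntegral.integral_div, intervalIntegral.integral_div] at hFTC
  simp only [add_zero, Real.one_rpow, mul_one] at hFTC
  linarith

/-- Time-weighted energy absorption: if `F' ≤ A √F + B F` on `[0,T]` with
`∫₀^t A(r)² (1+r)^{-ϑ} dr ≤ M` and `B(t) ≤ δ (1+t)^{-1}` for `δ` sufficiently small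
(depending on `ϑ`), then
`sup_t F(t)(1+t)^{-1-ϑ} + ∫₀^T F(r)(1+r)^{-2-ϑ} dr ≲ F(0) + M`. -/
theorem time_weighted_absorption (ϑ : ℝ) (hϑ : 0 < ϑ) :
    ∃ δ > 0, ∃ C > 0, ∀ (T M : ℝ), 0 ≤ T → 0 ≤ M →
      ∀ F A B : ℝ → ℝ,
      (∀ t ∈ Set.Icc (0 : ℝ) T, DifferentiableAt ℝ F t) →
      (∀ t ∈ Set.Icc (0 : ℝ) T, 0 ≤ F t) →
      (∀ t ∈ Set.Icc (0 : ℝ) T, 0 ≤ A t) →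
      (∀ t ∈ Set.Icc (0 : ℝ) T, 0 ≤ B t) →
      (∀ t ∈ Set.Icc (0 : ℝ) T, deriv F t ≤ A t * Real.sqrt (F t) + B t * F t) →
      IntervalIntegrable (fun r => A r ^ 2 * (1 + r) ^ (-ϑ)) volume 0 T →
      (∀ t ∈ Set.Icc (0 : ℝ) T, (∫ r in (0 : ℝ)..t, A r ^ 2 * (1 + r) ^ (-ϑ)) ≤ M) →
      (∀ t ∈ Set.Icc (0 : ℝ) T, B t ≤ δ * (1 + t)⁻¹) →
      (∀ t ∈ Set.Icc (0 : ℝ) T, F t * (1 + t) ^ (-(1 + ϑ)) ≤ C * (F 0 + M)) ∧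
        (∫ r in (0 : ℝ)..T, F r * (1 + r) ^ (-(2 + ϑ))) ≤ C * (F 0 + M) := by
  refine ⟨ϑ / 2, by positivity, 2, by norm_num, ?_⟩
  intro T M hT hM F A B hFd hF _ _ hder hA hAM hB
  have hF0 : 0 ≤ F 0 := hF 0 ⟨le_rfl, hT⟩
  have hweight : ∀ t ∈ Icc 0 T, 0 ≤ F t * (1 + t) ^ (-(1 + ϑ)) ∧
      0 ≤ ∫ r in 0..t, F r * (1 + r) ^ (-(2 + ϑ)) := fun t ht =>
    ⟨mul_nonneg (hF t ht) (Real.rpow_nonneg (by linarith [ht.1]) _),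
      intervalIntegral.integral_nonneg ht.1 fun r hr =>
        mul_nonneg (hF r ⟨hr.1, hr.2.trans ht.2⟩) (Real.rpow_nonneg (by linarith [hr.1]) _)⟩
  have henergy : ∀ t ∈ Icc 0 T, F t * (1 + t) ^ (-(1 + ϑ)) +
      (∫ r in 0..t, F r * (1 + r) ^ (-(2 + ϑ))) / 2 ≤ F 0 + M / 2 := fun t ht => by
    have hsub : Icc 0 t ⊆ Icc 0 T := Icc_subset_Icc_right ht.2
    have := weighted_energy_add_half_dissipation_le hϑ.le ht.1 (fun s hs => hFd s (hsub hs))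
      (fun s hs => hF s (hsub hs)) (fun s hs => hder s (hsub hs)) (fun s hs => hB s (hsub hs))
      (hA.mono_set (by simpa [uIcc_of_le, hT, ht.1] using hsub))
    linarith [hAM t ht]
  have hTmem : T ∈ Icc 0 T := ⟨hT, le_rfl⟩
  exact ⟨fun t ht => by linarith [henergy t ht, hweight t ht],
    by linarith [henergy T hTmem, hweight T hTmem]⟩
end
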